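/- arXiv:1704.08868 — 6 statements merged into one kernel-verified Lean document; each statement's English description precedes it below -/
import Mathlib

section
/- In the assignment gadget Û_N (with parameters r ≥ 2 and N ≥ 2): (a) for every i₀ ∈ {1,…,N}, the set S = {v_i : i ≠ i₀} of N−1 input vertices satisfies d(S,y) ≤ r for every non-input vertex y; (b) every set S of vertices of Û_N with d(S,y) ≤ r for all non-input vertices y has |S| ≥ N−1; and (c) every such covering set S with |S| = N−1 consists of input vertices only. -/
/-!
Every non-input vertex lies on one copy of the gadget of a pair `i < j` and is within distance
`r` of both `v_i` and `v_j` (along the path, or through the attachment point of the pendant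
part), and one of `i, j` differs from `i₀`; this gives (a).

For the lower bounds, let `deep` be the vertex `w` of a copy (the end of the pendant path for odd
`r`). A function that is `1`-Lipschitz along edges, vanishes at `deep` and exceeds `r` off the
copy and its two input vertices (`depth`) shows that the only vertices within distance `r` of
`deep` are those. So if a covering set `S` misses two inputs `v_{i₀}, v_{j₀}`, every input `v_i`
is in `S` or can be charged to a vertex of `S` in its own copy of a gadget (copy `true` of
`{i, i₀}`, or copy `false` of `{i₀, j₀}` for `i = i₀`), whence `|S| ≥ N`. Otherwise `S` contains
at least `N - 1` inputs, and any further vertex makes `|S| ≥ N`.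
-/

/-- Ordered pairs `i < j` of input indices. -/
abbrev APair (N : ℕ) := {p : Fin N × Fin N // p.1 < p.2}

/-- Number of extra (attachment) vertices per internal path of the assignment gadget:
for odd `r`, a pendant path of `⌊r/2⌋` vertices; for even `r`, the vertex `w` together with its
two pendant paths of `r/2 - 1` vertices each, i.e. `r - 1` vertices in total (arranged as a
chain whose middle vertex is `w`). -/
def extraLen (r : ℕ) : ℕ := if Even r then r - 1 else r / 2

/-- Vertices of the assignment gadget `Û_N`: input vertices `v_i`; for each pair `i < j` and
each of the two parallel paths (selected by a `Bool`), `r` internal path vertices (the one of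
zero-based index `t` being at distance `t+1` from `v_i` and `r-t` from `v_j`); and the extra
attachment vertices (a chain of `extraLen r` vertices per internal path). -/
abbrev AssignV (N r : ℕ) :=
  Fin N ⊕ ((APair N × Bool × Fin r) ⊕ (APair N × Bool × Fin (extraLen r)))

/-- Edges of the assignment gadget. For odd `r`, the extra chain is attached to the middle
internal vertex (at distance `⌊r/2⌋+1` from both endpoints, i.e. index `⌊r/2⌋`). For even `r`,
the first vertex of the extra chain is attached to the internal vertex at distance `r/2` from
`v_i` (index `r/2 - 1`) and the last one (index `r - 2`) to the internal vertex at distance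
`r/2 + 1` from `v_i` (index `r/2`); the middle vertex of the chain is `w`, at distance exactly
`r` from both `v_i` and `v_j`. -/
def assignRel (N r : ℕ) : AssignV N r → AssignV N r → Prop
  | Sum.inl i, Sum.inr (Sum.inl (p, _, t)) =>
      (p.1.1 = i ∧ (t : ℕ) = 0) ∨ (p.1.2 = i ∧ (t : ℕ) + 1 = r)
  | Sum.inr (Sum.inl (p, b, t)), Sum.inr (Sum.inl (p', b', t')) =>
      p = p' ∧ b = b' ∧ (t' : ℕ) = (t : ℕ) + 1
  | Sum.inr (Sum.inl (p, b, t)), Sum.inr (Sum.inr (p', b', s)) =>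
      p = p' ∧ b = b' ∧
        ((¬ Even r ∧ (s : ℕ) = 0 ∧ (t : ℕ) = r / 2) ∨
         (Even r ∧ (((s : ℕ) = 0 ∧ (t : ℕ) + 1 = r / 2) ∨ ((s : ℕ) + 2 = r ∧ (t : ℕ) = r / 2))))
  | Sum.inr (Sum.inr (p, b, s)), Sum.inr (Sum.inr (p', b', s')) =>
      p = p' ∧ b = b' ∧ (s' : ℕ) = (s : ℕ) + 1
  | _, _ => False

/-- The assignment gadget `Û_N`. -/
def assignGraph (N r : ℕ) : SimpleGraph (AssignV N r) := SimpleGraph.fromRel (assignRel N r)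

namespace SimpleGraph

variable {V : Type*} {G : SimpleGraph V}

theorem edist_le_of_edist_le_of_edist_le {x y z : V} {a b c : ℕ} (hxy : G.edist x y ≤ a)
    (hyz : G.edist y z ≤ b) (habc : a + b ≤ c) : G.edist x z ≤ c :=
  calc G.edist x z ≤ G.edist x y + G.edist y z := G.edist_triangle
    _ ≤ a + b := add_le_add hxy hyz
    _ ≤ c := mod_cast habc

theorem edist_le_sub_of_adj_succ (f : ℕ → V) {m n : ℕ} (hmn : m ≤ n)
    (hf : ∀ k, m ≤ k → k < n → G.Adj (f k) (f (k + 1))) :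
    G.edist (f m) (f n) ≤ (n - m : ℕ) := by
  induction n, hmn using Nat.le_induction with
  | base => simp
  | succ n hmn ih =>
    exact edist_le_of_edist_le_of_edist_le (ih fun k hk hkn => hf k hk (by omega))
      (edist_eq_one_iff_adj.mpr (hf n hmn (by omega))).le (by omega)

theorem Walk.apply_le_apply_add_length (f : V → ℕ) (hf : ∀ a b, G.Adj a b → f b ≤ f a + 1)
    {x y : V} (w : G.Walk x y) : f y ≤ f x + w.length := by
  induction w with
  | nil => simp
  | cons h _ ih =>
    rw [Walk.length_cons]
    have := hf _ _ h
    omega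

theorem apply_le_apply_add_of_edist_le (f : V → ℕ) (hf : ∀ a b, G.Adj a b → f b ≤ f a + 1)
    {x y : V} {n : ℕ} (h : G.edist x y ≤ n) : f y ≤ f x + n := by
  obtain ⟨w, hw⟩ := exists_walk_of_edist_ne_top (ne_top_of_le_ne_top (ENat.natCast_ne_top n) h)
  have hlen : w.length ≤ n := by exact_mod_cast hw ▸ h
  have := w.apply_le_apply_add_length f hf
  omega

end SimpleGraph

namespace Finset

theorem card_sub_one_le_card_of_forall_ne {α : Type*} [Fintype α] {I : Finset α}
    (hI : ∀ i j, i ≠ j → i ∈ I ∨ j ∈ I) : Fintype.card α - 1 ≤ I.card := by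
  classical
  have hmissing : Iᶜ.card ≤ 1 := card_le_one.2 fun i hi j hj => by
    by_contra hij
    rw [mem_compl] at hi hj
    exact (hI i j hij).elim hi hj
  have := card_add_card_compl I
  omega

end Finset

namespace AssignGadget

open SimpleGraph Finset

variable {N r : ℕ}

def internal (p : APair N) (b : Bool) (t : Fin r) : AssignV N r := .inr (.inl (p, b, t))

def extra (p : APair N) (b : Bool) (s : Fin (extraLen r)) : AssignV N r := .inr (.inr (p, b, s))

def label : AssignV N r → Fin N ⊕ (APair N × Bool)
  | .inl i => .inl i
  | .inr (.inl (p, b, _)) => .inr (p, b)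
  | .inr (.inr (p, b, _)) => .inr (p, b)

theorem label_eq_inl_iff {x : AssignV N r} {i : Fin N} : label x = .inl i ↔ x = .inl i := by
  rcases x with j | ⟨_, _, _⟩ | ⟨_, _, _⟩ <;> simp [label]

theorem adj_of_assignRel {x y : AssignV N r} (hne : x ≠ y) (h : assignRel N r x y) :
    (assignGraph N r).Adj x y := by
  rw [assignGraph, fromRel_adj]
  exact ⟨hne, .inl h⟩

def track (p : APair N) (b : Bool) (k : ℕ) : AssignV N r :=
  if k = 0 then .inl p.1.1 else if h : k - 1 < r then internal p b ⟨k - 1, h⟩ else .inl p.1.2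

theorem adj_track_succ (hr : 0 < r) (p : APair N) (b : Bool) {k : ℕ} (hk : k ≤ r) :
    (assignGraph N r).Adj (track p b k) (track p b (k + 1)) := by
  rcases Nat.eq_zero_or_pos k with rfl | hk0
  · simp only [track, dif_pos hr]
    exact adj_of_assignRel (by simp [internal]) (.inl ⟨rfl, rfl⟩)
  by_cases hkr : k < r
  · simp only [track, if_neg hk0.ne', dif_pos (show k - 1 < r by omega), dif_pos hkr,
      Nat.add_sub_cancel, Nat.add_one_ne_zero, if_false]
    exact adj_of_assignRel (by simp [internal]; omega) ⟨rfl, rfl, by simp; omega⟩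
  · obtain rfl : k = r := by omega
    simp only [track, if_neg hk0.ne', dif_pos (show k - 1 < k by omega), Nat.add_one_ne_zero,
      if_false, Nat.add_sub_cancel, lt_irrefl, dif_neg, not_false_eq_true]
    refine (adj_of_assignRel ?_ ?_).symm
    · simp [internal]
    · simp [internal, assignRel]; omega

theorem edist_fst_internal_le (p : APair N) (b : Bool) (t : Fin r) :
    (assignGraph N r).edist (.inl p.1.1) (internal p b t) ≤ (t + 1 : ℕ) := by
  have h := edist_le_sub_of_adj_succ (G := assignGraph N r) (track p b) (m := 0) (n := t + 1)
    (by omega) fun k _ hk => adj_track_succ t.pos p b (by omega)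
  simpa [track, t.isLt] using h

theorem edist_internal_snd_le (p : APair N) (b : Bool) (t : Fin r) :
    (assignGraph N r).edist (internal p b t) (.inl p.1.2) ≤ (r - t : ℕ) := by
  have h := edist_le_sub_of_adj_succ (G := assignGraph N r) (track p b) (m := t + 1) (n := r + 1)
    (by omega) fun k _ hk => adj_track_succ t.pos p b (by omega)
  simpa [track, t.isLt] using h

def extraChain (p : APair N) (b : Bool) (s : ℕ) : AssignV N r :=
  if h : s < extraLen r then extra p b ⟨s, h⟩ else .inl p.1.1

theorem edist_extra_le (p : APair N) (b : Bool) (s s' : Fin (extraLen r)) :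
    (assignGraph N r).edist (extra p b s) (extra p b s') ≤ (s' - s + (s - s') : ℕ) := by
  have chain : ∀ m n : Fin (extraLen r), m ≤ n →
      (assignGraph N r).edist (extra p b m) (extra p b n) ≤ (n - m : ℕ) := by
    intro m n hmn
    have h := edist_le_sub_of_adj_succ (G := assignGraph N r) (extraChain p b) hmn
      fun k _ hk => by
        simp only [extraChain, dif_pos (show k < extraLen r by omega),
          dif_pos (show k + 1 < extraLen r by omega)]
        refine adj_of_assignRel ?_ ?_ <;> simp [extra, assignRel]
    simpa [extraChain] using h
  rcases le_total s s' with h | h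
  · simpa [Nat.sub_eq_zero_of_le h] using chain s s' h
  · rw [edist_comm]; simpa [Nat.sub_eq_zero_of_le h] using chain s' s h

theorem edist_endpoints_extra_le_of_adj (p : APair N) (b : Bool) {t : Fin r}
    {s₀ : Fin (extraLen r)} (h : (assignGraph N r).Adj (internal p b t) (extra p b s₀))
    (s : Fin (extraLen r)) :
    (assignGraph N r).edist (.inl p.1.1) (extra p b s) ≤ (t + 2 + (s - s₀ + (s₀ - s)) : ℕ) ∧
    (assignGraph N r).edist (.inl p.1.2) (extra p b s) ≤ (r - t + 1 + (s - s₀ + (s₀ - s)) : ℕ) := by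
  have hs := edist_extra_le p b s₀ s
  have h1 := (edist_eq_one_iff_adj.mpr h).le
  constructor
  · exact edist_le_of_edist_le_of_edist_le
      (edist_le_of_edist_le_of_edist_le (edist_fst_internal_le p b t) h1 rfl.le) hs (by omega)
  · rw [edist_comm] at hs h1 ⊢
    exact edist_le_of_edist_le_of_edist_le hs
      (edist_le_of_edist_le_of_edist_le h1 (edist_internal_snd_le p b t) rfl.le) (by omega)

theorem edist_endpoints_extra_le (hr : 2 ≤ r) (p : APair N) (b : Bool) (s : Fin (extraLen r)) :
    (assignGraph N r).edist (.inl p.1.1) (extra p b s) ≤ r ∧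
    (assignGraph N r).edist (.inl p.1.2) (extra p b s) ≤ r := by
  have hs := s.isLt
  by_cases hev : Even r
  · obtain ⟨m, rfl⟩ := hev
    have hlen : extraLen (m + m) = m + m - 1 := if_pos ⟨m, rfl⟩
    have hleft := edist_endpoints_extra_le_of_adj p b (t := ⟨m - 1, by omega⟩)
      (s₀ := ⟨0, by omega⟩) (adj_of_assignRel (by simp [internal, extra])
        ⟨rfl, rfl, .inr ⟨⟨m, rfl⟩, .inl ⟨rfl, by simp; omega⟩⟩⟩) s
    have hright := edist_endpoints_extra_le_of_adj p b (t := ⟨m, by omega⟩)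
      (s₀ := ⟨m + m - 2, by omega⟩) (adj_of_assignRel (by simp [internal, extra])
        ⟨rfl, rfl, .inr ⟨⟨m, rfl⟩, .inr ⟨by simp; omega, by simp; omega⟩⟩⟩) s
    simp only at hleft hright
    constructor
    · rcases le_or_gt (s : ℕ) (m - 1) with hsm | hsm
      · exact hleft.1.trans (mod_cast by omega)
      · exact hright.1.trans (mod_cast by omega)
    · rcases le_or_gt ((s : ℕ) + 2) m with hsm | hsm
      · exact hleft.2.trans (mod_cast by omega)
      · exact hright.2.trans (mod_cast by omega)
  · have hodd := Nat.odd_iff.mp (Nat.not_even_iff_odd.mp hev)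
    have hlen : extraLen r = r / 2 := if_neg hev
    have h := edist_endpoints_extra_le_of_adj p b (t := ⟨r / 2, by omega⟩)
      (s₀ := ⟨0, by omega⟩) (adj_of_assignRel (by simp [internal, extra])
        ⟨rfl, rfl, .inl ⟨hev, rfl, rfl⟩⟩) s
    simp only at h
    exact ⟨h.1.trans (mod_cast by omega), h.2.trans (mod_cast by omega)⟩

def deep (hr : 2 ≤ r) (p : APair N) (b : Bool) : AssignV N r :=
  extra p b ⟨r / 2 - 1, by unfold extraLen; split_ifs <;> omega⟩

/-- The distance to `deep hr p b` measured inside copy `b` of the gadget of `p`, and `r + 1` off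
it. -/
def depth (p : APair N) (b : Bool) : AssignV N r → ℕ
  | .inl k => if k = p.1.1 ∨ k = p.1.2 then r else r + 1
  | .inr (.inl (p', b', t)) => if p' = p ∧ b' = b then max (t : ℕ) (r - 1 - t) else r + 1
  | .inr (.inr (p', b', s)) =>
      if p' = p ∧ b' = b then (s : ℕ) - (r / 2 - 1) + (r / 2 - 1 - s) else r + 1

theorem depth_le_succ_of_assignRel (p : APair N) (b : Bool) {x y : AssignV N r}
    (h : assignRel N r x y) : depth p b x ≤ depth p b y + 1 ∧ depth p b y ≤ depth p b x + 1 := by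
  rcases x with k | ⟨p', b', t⟩ | ⟨p', b', s⟩ <;>
    rcases y with k' | ⟨p'', b'', t'⟩ | ⟨p'', b'', s'⟩ <;> simp only [assignRel] at h
  · have := t'.isLt
    simp only [depth]
    split_ifs with h1 h2 <;> try omega
    rcases h with ⟨hk, -⟩ | ⟨hk, -⟩ <;> simp_all
  · obtain ⟨rfl, rfl, ht⟩ := h
    have := t.isLt
    have := t'.isLt
    simp only [depth]
    split_ifs <;> omega
  · obtain ⟨rfl, rfl, hc⟩ := h
    simp only [depth, Nat.even_iff] at hc ⊢
    split_ifs <;> omega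
  · obtain ⟨rfl, rfl, hs⟩ := h
    simp only [depth]
    split_ifs <;> omega

theorem depth_le_succ_of_adj (p : APair N) (b : Bool) {x y : AssignV N r}
    (h : (assignGraph N r).Adj x y) : depth p b y ≤ depth p b x + 1 := by
  rw [assignGraph, fromRel_adj] at h
  rcases h.2 with h | h
  · exact (depth_le_succ_of_assignRel p b h).2
  · exact (depth_le_succ_of_assignRel p b h).1

theorem depth_deep (hr : 2 ≤ r) (p : APair N) (b : Bool) : depth p b (deep hr p b) = 0 := by
  simp [deep, extra, depth]

theorem eq_inl_or_label_eq_of_edist_deep_le (hr : 2 ≤ r) (p : APair N) (b : Bool)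
    {x : AssignV N r} (h : (assignGraph N r).edist x (deep hr p b) ≤ r) :
    x = .inl p.1.1 ∨ x = .inl p.1.2 ∨ label x = .inr (p, b) := by
  rw [edist_comm] at h
  have hx := apply_le_apply_add_of_edist_le (depth p b) (fun _ _ => depth_le_succ_of_adj p b) h
  rw [depth_deep] at hx
  rcases x with k | ⟨p', b', t⟩ | ⟨p', b', s⟩ <;> simp only [depth] at hx <;>
    split_ifs at hx with hin
  · rcases hin with rfl | rfl <;> simp
  · omega
  · simp [label, hin]
  · omega
  · simp [label, hin]
  · omega

def CoversNonInputs (S : Finset (AssignV N r)) : Prop :=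
  ∀ y : AssignV N r, (¬ ∃ i : Fin N, y = .inl i) → ∃ s ∈ S, (assignGraph N r).edist s y ≤ r

theorem CoversNonInputs.inl_mem_or_inr_mem_image_label (hr : 2 ≤ r) {S : Finset (AssignV N r)}
    (hS : CoversNonInputs S) (p : APair N) (b : Bool) :
    .inl p.1.1 ∈ S.image label ∨ .inl p.1.2 ∈ S.image label ∨ .inr (p, b) ∈ S.image label := by
  obtain ⟨s, hs, hsd⟩ := hS (deep hr p b) (by rintro ⟨i, h⟩; simp [deep, extra] at h)
  rcases eq_inl_or_label_eq_of_edist_deep_le hr p b hsd with rfl | rfl | h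
  · exact .inl (mem_image_of_mem label hs)
  · exact .inr (.inl (mem_image_of_mem label hs))
  · exact .inr (.inr (h ▸ mem_image_of_mem label hs))

theorem inl_mem_image_label {S : Finset (AssignV N r)} {i : Fin N} :
    .inl i ∈ S.image label ↔ .inl i ∈ S := by
  simp [label_eq_inl_iff]

def pairOf (i j : Fin N) (h : i ≠ j) : APair N := ⟨(min i j, max i j), min_lt_max.2 h⟩

theorem pairOf_left_injective {i i' k : Fin N} (h : i ≠ k) (h' : i' ≠ k)
    (he : pairOf i k h = pairOf i' k h') : i = i' := by
  simp only [pairOf, Subtype.mk.injEq, Prod.mk.injEq] at he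
  rcases le_total i k with hi | hi <;> rcases le_total i' k with hi' | hi' <;> simp_all

theorem inr_mem_of_inl_not_mem {L : Finset (Fin N ⊕ (APair N × Bool))}
    (hL : ∀ p b, .inl p.1.1 ∈ L ∨ .inl p.1.2 ∈ L ∨ .inr (p, b) ∈ L)
    {i j : Fin N} (hij : i ≠ j) (hi : .inl i ∉ L) (hj : .inl j ∉ L) (b : Bool) :
    .inr (pairOf i j hij, b) ∈ L := by
  have hmin : .inl (min i j) ∉ L := by rcases min_choice i j with h | h <;> rw [h] <;> assumption
  have hmax : .inl (max i j) ∉ L := by rcases max_choice i j with h | h <;> rw [h] <;> assumption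
  simpa [pairOf, hmin, hmax] using hL (pairOf i j hij) b

theorem card_le_of_inl_not_mem {L : Finset (Fin N ⊕ (APair N × Bool))}
    (hL : ∀ p b, .inl p.1.1 ∈ L ∨ .inl p.1.2 ∈ L ∨ .inr (p, b) ∈ L)
    {i₀ j₀ : Fin N} (hij : i₀ ≠ j₀) (hi₀ : .inl i₀ ∉ L) (hj₀ : .inl j₀ ∉ L) : N ≤ L.card := by
  classical
  let g : Fin N → Fin N ⊕ (APair N × Bool) := fun i =>
    if .inl i ∈ L then .inl i
    else if h : i = i₀ then .inr (pairOf i₀ j₀ hij, false) else .inr (pairOf i i₀ h, true)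
  have hg : ∀ i ∈ (univ : Finset (Fin N)), g i ∈ L := by
    intro i _
    simp only [g]
    split_ifs with hi h
    · exact hi
    · exact inr_mem_of_inl_not_mem hL hij hi₀ hj₀ false
    · exact inr_mem_of_inl_not_mem hL h hi hi₀ true
  have hinj : Set.InjOn g (univ : Finset (Fin N)) := by
    intro i _ i' _ he
    simp only [g] at he
    split_ifs at he <;> try simp_all
    exact pairOf_left_injective _ _ he
  simpa using card_le_card_of_injOn g hg hinj

theorem card_preimage_inl_lt {S : Finset (AssignV N r)} {s : AssignV N r} (hs : s ∈ S)
    (hsi : ¬ ∃ i : Fin N, s = .inl i) :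
    (S.preimage Sum.inl Sum.inl_injective.injOn).card < S.card := by
  rw [← card_map (f := .inl)]
  refine card_lt_card ((ssubset_iff_of_subset fun y hy => ?_).2 ⟨s, hs, fun hy => ?_⟩)
  · obtain ⟨i, hi, rfl⟩ := mem_map.1 hy
    exact mem_preimage.1 hi
  · obtain ⟨i, -, rfl⟩ := mem_map.1 hy
    exact hsi ⟨i, rfl⟩

theorem exists_edist_endpoints_le (hr : 2 ≤ r) {y : AssignV N r} (hy : ¬ ∃ i : Fin N, y = .inl i) :
    ∃ p : APair N, (assignGraph N r).edist (.inl p.1.1) y ≤ r ∧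
      (assignGraph N r).edist (.inl p.1.2) y ≤ r := by
  rcases y with i | ⟨p, b, t⟩ | ⟨p, b, s⟩
  · exact absurd ⟨i, rfl⟩ hy
  · refine ⟨p, (edist_fst_internal_le p b t).trans (mod_cast t.isLt), ?_⟩
    rw [edist_comm]
    exact (edist_internal_snd_le p b t).trans (mod_cast Nat.sub_le r t)
  · exact ⟨p, edist_endpoints_extra_le hr p b s⟩

theorem CoversNonInputs.sub_one_lt_card_or (hr : 2 ≤ r) {S : Finset (AssignV N r)}
    (hS : CoversNonInputs S) :
    N - 1 < S.card ∨ N - 1 ≤ (S.preimage Sum.inl Sum.inl_injective.injOn).card := by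
  by_cases h : ∃ i j : Fin N, i ≠ j ∧ (.inl i : AssignV N r) ∉ S ∧ .inl j ∉ S
  · obtain ⟨i, j, hij, hi, hj⟩ := h
    have hN := card_le_of_inl_not_mem (hS.inl_mem_or_inr_mem_image_label hr) hij
      (inl_mem_image_label.not.2 hi) (inl_mem_image_label.not.2 hj)
    have := card_image_le (s := S) (f := label)
    have := i.pos
    exact .inl (by omega)
  · push Not at h
    have hI := card_sub_one_le_card_of_forall_ne (I := S.preimage Sum.inl Sum.inl_injective.injOn)
      fun i j hij => by simp only [mem_preimage]; tauto
    rw [Fintype.card_fin] at hI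
    exact .inr hI

end AssignGadget

theorem stmt2_general (N r : ℕ) (hr : 2 ≤ r) :
    (∀ i₀ : Fin N, ∀ y : AssignV N r, (¬ ∃ i : Fin N, y = Sum.inl i) →
      ∃ i : Fin N, i ≠ i₀ ∧ (assignGraph N r).edist (Sum.inl i) y ≤ (r : ℕ∞)) ∧
    (∀ S : Finset (AssignV N r),
      (∀ y : AssignV N r, (¬ ∃ i : Fin N, y = Sum.inl i) →
        ∃ s ∈ S, (assignGraph N r).edist s y ≤ (r : ℕ∞)) →
      N - 1 ≤ S.card) ∧
    (∀ S : Finset (AssignV N r),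
      (∀ y : AssignV N r, (¬ ∃ i : Fin N, y = Sum.inl i) →
        ∃ s ∈ S, (assignGraph N r).edist s y ≤ (r : ℕ∞)) →
      S.card = N - 1 → ∀ s ∈ S, ∃ i : Fin N, s = Sum.inl i) := by
  open AssignGadget in
  refine ⟨fun i₀ y hy => ?_, fun S hS => ?_, fun S hS hcard s hs => ?_⟩
  · obtain ⟨p, h₁, h₂⟩ := exists_edist_endpoints_le hr hy
    by_cases hp : p.1.1 = i₀
    · exact ⟨p.1.2, hp ▸ p.2.ne', h₂⟩
    · exact ⟨p.1.1, hp, h₁⟩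
  · rcases CoversNonInputs.sub_one_lt_card_or hr hS with h | h
    · exact h.le
    · exact h.trans (Finset.card_le_card_of_injOn Sum.inl (fun i hi => Finset.mem_preimage.1 hi)
        Sum.inl_injective.injOn)
  · by_contra hsi
    rcases CoversNonInputs.sub_one_lt_card_or hr hS with h | h
    · omega
    · have := card_preimage_inl_lt hs hsi
      omega

/-- (a) Any `N-1` of the input vertices cover all non-input vertices of `Û_N` within
distance `r`; (b) any set covering all non-input vertices within distance `r` has at least
`N-1` vertices; (c) any such covering set of size exactly `N-1` consists of input vertices. -/
theorem stmt2 (N r : ℕ) (hr : 2 ≤ r) (hN : 2 ≤ N) :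
    (∀ i₀ : Fin N, ∀ y : AssignV N r, (¬ ∃ i : Fin N, y = Sum.inl i) →
      ∃ i : Fin N, i ≠ i₀ ∧ (assignGraph N r).edist (Sum.inl i) y ≤ (r : ℕ∞)) ∧
    (∀ S : Finset (AssignV N r),
      (∀ y : AssignV N r, (¬ ∃ i : Fin N, y = Sum.inl i) →
        ∃ s ∈ S, (assignGraph N r).edist s y ≤ (r : ℕ∞)) →
      N - 1 ≤ S.card) ∧
    (∀ S : Finset (AssignV N r),
      (∀ y : AssignV N r, (¬ ∃ i : Fin N, y = Sum.inl i) →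
        ∃ s ∈ S, (assignGraph N r).edist s y ≤ (r : ℕ∞)) →
      S.card = N - 1 → ∀ s ∈ S, ∃ i : Fin N, s = Sum.inl i) :=
  stmt2_general N r hr
end

section
/- Let K be a set of vertices of H(M,r) containing exactly one vertex from each of the 2M paths, say a_j^{α_{y_j}} from A^j and b_j^{β_{y_j}} from B^j, where for each j the pair (α_{y_j}, β_{y_j}) is the canonical pair of index y_j ∈ {1,…,3r+1}. If, for some 1 ≤ j ≤ M−1, every vertex of the four paths A^j, B^j, A^{j+1}, B^{j+1} is at distance at most r from K, then y_{j+1} ≤ y_j. -/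
/-- Vertices of `H(M,r)`: `(j, false, t)` is `a_j^t` (on path `A^j`) and `(j, true, t)` is
`b_j^t` (on path `B^j`), with `t ∈ {0,…,2r}`. -/
abbrev HV (M r : ℕ) := Fin M × Bool × Fin (2 * r + 1)

/-- Edges of `H(M,r)`: consecutive vertices on each path, plus the four edges joining each of
`a_j^{2r}, b_j^{2r}` to each of `a_{j+1}^0, b_{j+1}^0`. -/
def hRel (M r : ℕ) : HV M r → HV M r → Prop := fun x y =>
  (x.1 = y.1 ∧ x.2.1 = y.2.1 ∧ (y.2.2 : ℕ) = (x.2.2 : ℕ) + 1) ∨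
  ((x.2.2 : ℕ) = 2 * r ∧ (y.2.2 : ℕ) = 0 ∧ (y.1 : ℕ) = (x.1 : ℕ) + 1)

/-- The graph `H(M,r)`. -/
def hGraph (M r : ℕ) : SimpleGraph (HV M r) := SimpleGraph.fromRel (hRel M r)

/-- The canonical pair `(α_y, β_y)` for `y ∈ {1,…,3r+1}`. -/
def canPair (r y : ℕ) : ℕ × ℕ :=
  if y ≤ 2 * r then
    if Odd y then (y / 2, y / 2) else (y / 2 - 1, 2 * r - y / 2 + 1)
  else (y - r - 1, y - r - 1)


/-- Potential function used for distance lower bounds. -/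
def potN (r q t0 : ℕ) (c0 : Bool) (i : ℕ) (c : Bool) (t : ℕ) : ℕ :=
  if i = q then
    (if c = c0 then max t t0 - min t t0 else min (t + t0 + 2) (4 * r + 2 - t - t0))
  else if i < q then (q - i) * (2 * r + 1) + t0 - t
  else (i - q) * (2 * r + 1) + t - t0

lemma potN_step1 (r q t0 : ℕ) (c0 : Bool) (i : ℕ) (c : Bool) (t : ℕ)
    (ht : t + 1 ≤ 2 * r) (ht0 : t0 ≤ 2 * r) :
    potN r q t0 c0 i c (t + 1) ≤ potN r q t0 c0 i c t + 1 ∧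
    potN r q t0 c0 i c t ≤ potN r q t0 c0 i c (t + 1) + 1 := by
  unfold potN
  rcases lt_trichotomy i q with h | h | h
  · rw [if_neg (show ¬ i = q by omega), if_pos h, if_neg (show ¬ i = q by omega), if_pos h]
    have h1 : 1 * (2 * r + 1) ≤ (q - i) * (2 * r + 1) := Nat.mul_le_mul_right _ (by omega)
    omega
  · subst h
    rw [if_pos rfl, if_pos rfl]
    by_cases hc : c = c0 <;> simp only [hc, if_true, if_false] <;> omega
  · rw [if_neg (show ¬ i = q by omega), if_neg (show ¬ i < q by omega),
      if_neg (show ¬ i = q by omega), if_neg (show ¬ i < q by omega)]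
    omega

lemma potN_step2 (r q t0 : ℕ) (c0 : Bool) (i : ℕ) (c c' : Bool)
    (ht0 : t0 ≤ 2 * r) :
    potN r q t0 c0 (i + 1) c' 0 ≤ potN r q t0 c0 i c (2 * r) + 1 ∧
    potN r q t0 c0 i c (2 * r) ≤ potN r q t0 c0 (i + 1) c' 0 + 1 := by
  unfold potN
  rcases lt_trichotomy (i + 1) q with h | h | h
  · have e2 : (q - i) * (2 * r + 1) = (q - (i + 1)) * (2 * r + 1) + (2 * r + 1) := by
      rw [show q - i = (q - (i + 1)) + 1 by omega, Nat.succ_mul]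
    split_ifs <;> omega
  · have e2 : (q - i) * (2 * r + 1) = 2 * r + 1 := by
      rw [show q - i = 1 by omega, one_mul]
    split_ifs <;> omega
  · rcases lt_trichotomy i q with h2 | h2 | h2
    · omega
    · subst h2
      have e2 : (i + 1 - i) * (2 * r + 1) = 2 * r + 1 := by
        rw [show i + 1 - i = 1 by omega, one_mul]
      split_ifs <;> omega
    · have e2 : (i + 1 - q) * (2 * r + 1) = (i - q) * (2 * r + 1) + (2 * r + 1) := by
        rw [show i + 1 - q = (i - q) + 1 by omega, Nat.succ_mul]
      have e3 : 1 * (2 * r + 1) ≤ (i - q) * (2 * r + 1) := Nat.mul_le_mul_right _ (by omega)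
      split_ifs <;> omega

def pot (M r q t0 : ℕ) (c0 : Bool) : HV M r → ℕ :=
  fun v => potN r q t0 c0 (v.1 : ℕ) v.2.1 (v.2.2 : ℕ)

lemma pot_adj {M r : ℕ} (q t0 : ℕ) (c0 : Bool) (ht0 : t0 ≤ 2 * r) {u v : HV M r}
    (h : (hGraph M r).Adj u v) : pot M r q t0 c0 v ≤ pot M r q t0 c0 u + 1 := by
  obtain ⟨ui, uc, ut⟩ := u
  obtain ⟨vi, vc, vt⟩ := v
  rw [hGraph, SimpleGraph.fromRel_adj] at h
  unfold pot
  obtain ⟨-, h | h⟩ := h <;> obtain ⟨h1, h2, h3⟩ | ⟨h1, h2, h3⟩ := h <;>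
    simp only at h1 h2 h3 ⊢
  · have hb : (vt : ℕ) ≤ 2 * r := by have := vt.isLt; omega
    rw [← h1, ← h2, h3]
    exact (potN_step1 r q t0 c0 (ui : ℕ) uc (ut : ℕ) (by omega) ht0).1
  · rw [h1, h2, h3]
    exact (potN_step2 r q t0 c0 (ui : ℕ) uc vc ht0).1
  · have hb : (ut : ℕ) ≤ 2 * r := by have := ut.isLt; omega
    rw [← h1, ← h2, h3]
    exact (potN_step1 r q t0 c0 (vi : ℕ) vc (vt : ℕ) (by omega) ht0).2
  · rw [h1, h2, h3]
    exact (potN_step2 r q t0 c0 (vi : ℕ) vc uc ht0).2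

lemma pot_walk {M r : ℕ} (q t0 : ℕ) (c0 : Bool) (ht0 : t0 ≤ 2 * r) {u v : HV M r}
    (p : (hGraph M r).Walk u v) :
    pot M r q t0 c0 v ≤ pot M r q t0 c0 u + p.length := by
  induction p with
  | nil => simp
  | cons h p ih =>
    have := pot_adj q t0 c0 ht0 h
    rw [SimpleGraph.Walk.length_cons]
    omega

lemma colAnal (r q t0 i : ℕ) (c0 c : Bool) (ts : ℕ) (hts : ts ≤ 2 * r) (ht0 : t0 ≤ 2 * r)
    (h : potN r q t0 c0 i c ts ≤ r) :
    (i = q ∧ ((c = c0 ∧ max ts t0 - min ts t0 ≤ r) ∨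
        (c ≠ c0 ∧ min (ts + t0 + 2) (4 * r + 2 - ts - t0) ≤ r))) ∨
    (i = q + 1 ∧ 2 * r + 1 + ts ≤ r + t0) ∨
    (i + 1 = q ∧ 2 * r + 1 + t0 ≤ r + ts) := by
  unfold potN at h
  rcases lt_trichotomy i q with hlt | he | hgt
  · right; right
    rw [if_neg (show ¬ i = q by omega), if_pos hlt] at h
    by_cases h2 : i + 1 = q
    · have e1 : q - i = 1 := by omega
      rw [e1, one_mul] at h
      exact ⟨h2, by omega⟩
    · exfalso
      have h3 : 2 ≤ q - i := by omega
      have h4 : 2 * (2 * r + 1) ≤ (q - i) * (2 * r + 1) := Nat.mul_le_mul_right _ h3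
      omega
  · left
    rw [if_pos he] at h
    refine ⟨he, ?_⟩
    by_cases hc : c = c0
    · left; rw [if_pos hc] at h; exact ⟨hc, h⟩
    · right; rw [if_neg hc] at h; exact ⟨hc, h⟩
  · right; left
    rw [if_neg (show ¬ i = q by omega), if_neg (show ¬ i < q by omega)] at h
    by_cases h2 : i = q + 1
    · have e1 : i - q = 1 := by omega
      rw [e1, one_mul] at h
      exact ⟨h2, by omega⟩
    · exfalso
      have h3 : 2 ≤ i - q := by omega
      have h4 : 2 * (2 * r + 1) ≤ (i - q) * (2 * r + 1) := Nat.mul_le_mul_right _ h3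
      omega

lemma extract {M r : ℕ} (K : Set (HV M r)) (q : Fin M) (c0 : Bool) (t0 : ℕ) (ht0 : t0 ≤ 2 * r)
    (h : ∃ s ∈ K, (hGraph M r).edist s (q, c0, (⟨t0, by omega⟩ : Fin (2 * r + 1))) ≤ (r : ℕ∞)) :
    ∃ s ∈ K, potN r (q : ℕ) t0 c0 (s.1 : ℕ) s.2.1 (s.2.2 : ℕ) ≤ r := by
  obtain ⟨s, hsK, hsd⟩ := h
  refine ⟨s, hsK, ?_⟩
  rw [SimpleGraph.edist_comm] at hsd
  have hne : (hGraph M r).edist (q, c0, (⟨t0, by omega⟩ : Fin (2 * r + 1))) s ≠ ⊤ := by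
    intro htop
    rw [htop] at hsd
    exact absurd hsd (by simp)
  obtain ⟨p, hp⟩ := SimpleGraph.exists_walk_of_edist_ne_top hne
  have hlen : p.length ≤ r := by
    rw [← hp] at hsd
    exact_mod_cast hsd
  have hw := pot_walk (q : ℕ) t0 c0 ht0 p
  have h0 : pot M r (q : ℕ) t0 c0 (q, c0, (⟨t0, by omega⟩ : Fin (2 * r + 1))) = 0 := by
    unfold pot potN
    simp
  rw [h0] at hw
  exact le_trans (le_trans hw (by omega)) le_rfl


lemma extract' {M r : ℕ} (K : Set (HV M r)) (q : Fin M) (c0 : Bool) (t0 : ℕ) (ht0 : t0 ≤ 2 * r)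
    (h : ∃ s ∈ K, (hGraph M r).edist s (q, c0, (⟨t0, by omega⟩ : Fin (2 * r + 1))) ≤ (r : ℕ∞)) :
    ∃ s ∈ K,
      (((s.1 : ℕ) = (q : ℕ) ∧ ((s.2.1 = c0 ∧ max (s.2.2 : ℕ) t0 - min (s.2.2 : ℕ) t0 ≤ r) ∨
          (s.2.1 ≠ c0 ∧ min ((s.2.2 : ℕ) + t0 + 2) (4 * r + 2 - (s.2.2 : ℕ) - t0) ≤ r))) ∨
        ((s.1 : ℕ) = (q : ℕ) + 1 ∧ 2 * r + 1 + (s.2.2 : ℕ) ≤ r + t0) ∨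
        ((s.1 : ℕ) + 1 = (q : ℕ) ∧ 2 * r + 1 + t0 ≤ r + (s.2.2 : ℕ))) := by
  obtain ⟨s, hsK, hpot⟩ := extract K q c0 t0 ht0 h
  exact ⟨s, hsK, colAnal r (q : ℕ) t0 (s.1 : ℕ) c0 s.2.1 (s.2.2 : ℕ)
    (by have := s.2.2.isLt; omega) ht0 hpot⟩

/-- helper for the "witness column" case. -/
lemma colqq (r A B t0 ts : ℕ) (c0 c : Bool)
    (hKs : ts = if c then B else A)
    (hD : (c = c0 ∧ max ts t0 - min ts t0 ≤ r) ∨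
      (c ≠ c0 ∧ min (ts + t0 + 2) (4 * r + 2 - ts - t0) ≤ r)) :
    (c0 = false → (max A t0 - min A t0 ≤ r ∨ min (B + t0 + 2) (4 * r + 2 - B - t0) ≤ r)) ∧
    (c0 = true → (max B t0 - min B t0 ≤ r ∨ min (A + t0 + 2) (4 * r + 2 - A - t0) ≤ r)) := by
  cases c <;> cases c0 <;> simp_all

/-- helper for the "neighbouring column" case. -/
lemma colnb (A B ts : ℕ) (c : Bool) (hKs : ts = if c then B else A) : ts = A ∨ ts = B := by
  cases c <;> simp_all


/-- If `K` consists of the vertices `a_j^{α_{y_j}}, b_j^{β_{y_j}}` for canonical pairs of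
indices `y_j ∈ {1,…,3r+1}`, and all vertices of the four paths `A^j, B^j, A^{j+1}, B^{j+1}`
are within distance `r` of `K`, then `y_{j+1} ≤ y_j`. -/
theorem stmt4 (M r : ℕ) (hM : 1 ≤ M) (hr : 1 ≤ r) (y : Fin M → ℕ)
    (hy : ∀ j : Fin M, 1 ≤ y j ∧ y j ≤ 3 * r + 1)
    (K : Set (HV M r))
    (hK : ∀ v : HV M r, v ∈ K ↔
      (v.2.2 : ℕ) = (if v.2.1 then (canPair r (y v.1)).2 else (canPair r (y v.1)).1))
    (j : Fin M) (hj : (j : ℕ) + 1 < M)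
    (hcov : ∀ j' : Fin M, ((j' : ℕ) = (j : ℕ) ∨ (j' : ℕ) = (j : ℕ) + 1) →
      ∀ (c : Bool) (t : Fin (2 * r + 1)),
        ∃ s ∈ K, (hGraph M r).edist s (j', c, t) ≤ (r : ℕ∞)) :
    y ⟨(j : ℕ) + 1, hj⟩ ≤ y j := by
  classical
  set j1 : Fin M := ⟨(j : ℕ) + 1, hj⟩ with hj1
  set z := y j with hz
  set w := y j1 with hw
  obtain ⟨hz1, hz2⟩ := hy j
  obtain ⟨hw1, hw2⟩ := hy j1
  by_contra hcon
  push_neg at hcon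
  have hj1v : (j1 : ℕ) = (j : ℕ) + 1 := rfl
  have C1 : z ≤ 2 * r →
      ∃ p, (p = (canPair r w).1 ∨ p = (canPair r w).2) ∧ 2 * p + 2 ≤ z + z % 2 := by
    intro hz2r
    by_cases hzodd : Odd z
    · have hzo : z % 2 = 1 := Nat.odd_iff.mp hzodd
      have hcp : canPair r z = (z / 2, z / 2) := by simp [canPair, hz2r, hzodd]
      have ht0 : z / 2 + r + 1 ≤ 2 * r := by omega
      obtain ⟨s, hsK, hD⟩ := extract' K j false (z / 2 + r + 1) ht0
        (hcov j (Or.inl rfl) false ⟨z / 2 + r + 1, by omega⟩)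
      have hKs := (hK s).mp hsK
      have hsb : (s.2.2 : ℕ) ≤ 2 * r := by have := s.2.2.isLt; omega
      rcases hD with ⟨hcol, hD⟩ | ⟨hcol, hD⟩ | ⟨hcol, hD⟩
      · exfalso
        have hsj : s.1 = j := Fin.ext hcol
        rw [hsj, ← hz, hcp] at hKs
        have := (colqq r (z / 2) (z / 2) (z / 2 + r + 1) (s.2.2 : ℕ) false s.2.1 hKs hD).1 rfl
        rcases this with h | h <;> omega
      · have hsj : s.1 = j1 := Fin.ext (by omega)
        rw [hsj, ← hw] at hKs
        rcases colnb _ _ _ _ hKs with h | h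
        · exact ⟨(s.2.2 : ℕ), Or.inl h, by omega⟩
        · exact ⟨(s.2.2 : ℕ), Or.inr h, by omega⟩
      · exfalso; omega
    · have hzo : z % 2 = 0 := Nat.even_iff.mp (Nat.not_odd_iff_even.mp hzodd)
      have hcp : canPair r z = (z / 2 - 1, 2 * r - z / 2 + 1) := by
        simp [canPair, hz2r, hzodd]
      have ht0 : z / 2 + r ≤ 2 * r := by omega
      obtain ⟨s, hsK, hD⟩ := extract' K j false (z / 2 + r) ht0
        (hcov j (Or.inl rfl) false ⟨z / 2 + r, by omega⟩)
      have hKs := (hK s).mp hsK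
      have hsb : (s.2.2 : ℕ) ≤ 2 * r := by have := s.2.2.isLt; omega
      rcases hD with ⟨hcol, hD⟩ | ⟨hcol, hD⟩ | ⟨hcol, hD⟩
      · exfalso
        have hsj : s.1 = j := Fin.ext hcol
        rw [hsj, ← hz, hcp] at hKs
        have := (colqq r (z / 2 - 1) (2 * r - z / 2 + 1) (z / 2 + r) (s.2.2 : ℕ)
          false s.2.1 hKs hD).1 rfl
        rcases this with h | h <;> omega
      · have hsj : s.1 = j1 := Fin.ext (by omega)
        rw [hsj, ← hw] at hKs
        rcases colnb _ _ _ _ hKs with h | h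
        · exact ⟨(s.2.2 : ℕ), Or.inl h, by omega⟩
        · exact ⟨(s.2.2 : ℕ), Or.inr h, by omega⟩
      · exfalso; omega
  by_cases hw2r : w ≤ 2 * r
  · have hz2r : z ≤ 2 * r := by omega
    obtain ⟨p, hp, hple⟩ := C1 hz2r
    by_cases hwodd : Odd w
    · have hwo : w % 2 = 1 := Nat.odd_iff.mp hwodd
      have hcp : canPair r w = (w / 2, w / 2) := by simp [canPair, hw2r, hwodd]
      rw [hcp] at hp
      rcases hp with hp | hp <;> simp at hp <;> omega
    · have hwo : w % 2 = 0 := Nat.even_iff.mp (Nat.not_odd_iff_even.mp hwodd)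
      have hcp : canPair r w = (w / 2 - 1, 2 * r - w / 2 + 1) := by
        simp [canPair, hw2r, hwodd]
      rw [hcp] at hp
      by_cases hzodd : Odd z
      · -- C2: witness (j+1, true, r - w/2), get info about column j
        have hzo : z % 2 = 1 := Nat.odd_iff.mp hzodd
        have hcpz : canPair r z = (z / 2, z / 2) := by simp [canPair, hz2r, hzodd]
        have ht0 : r - w / 2 ≤ 2 * r := by omega
        obtain ⟨s, hsK, hD⟩ := extract' K j1 true (r - w / 2) ht0
          (hcov j1 (Or.inr rfl) true ⟨r - w / 2, by omega⟩)
        have hKs := (hK s).mp hsK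
        have hsb : (s.2.2 : ℕ) ≤ 2 * r := by have := s.2.2.isLt; omega
        rcases hD with ⟨hcol, hD⟩ | ⟨hcol, hD⟩ | ⟨hcol, hD⟩
        · have hsj : s.1 = j1 := Fin.ext (by rw [hcol])
          rw [hsj, ← hw, hcp] at hKs
          have := (colqq r (w / 2 - 1) (2 * r - w / 2 + 1) (r - w / 2) (s.2.2 : ℕ)
            true s.2.1 hKs hD).2 rfl
          rcases this with h | h <;> omega
        · rw [hj1v] at hcol; omega
        · have hsj : s.1 = j := Fin.ext (by rw [hj1v] at hcol; omega)
          rw [hsj, ← hz, hcpz] at hKs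
          rcases colnb _ _ _ _ hKs with h | h <;> omega
      · have hzo : z % 2 = 0 := Nat.even_iff.mp (Nat.not_odd_iff_even.mp hzodd)
        rcases hp with hp | hp <;> simp at hp <;> omega
  · have hcpw : canPair r w = (w - r - 1, w - r - 1) := by
      simp [canPair, show ¬ w ≤ 2 * r by omega]
    by_cases hz2r : z ≤ 2 * r
    · obtain ⟨p, hp, hple⟩ := C1 hz2r
      rw [hcpw] at hp
      rcases hp with hp | hp <;> simp at hp <;> omega
    · -- C3: witness (j+1, false, w - 2r - 2)
      have hcpz : canPair r z = (z - r - 1, z - r - 1) := by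
        simp [canPair, show ¬ z ≤ 2 * r by omega]
      have ht0 : w - 2 * r - 2 ≤ 2 * r := by omega
      obtain ⟨s, hsK, hD⟩ := extract' K j1 false (w - 2 * r - 2) ht0
        (hcov j1 (Or.inr rfl) false ⟨w - 2 * r - 2, by omega⟩)
      have hKs := (hK s).mp hsK
      have hsb : (s.2.2 : ℕ) ≤ 2 * r := by have := s.2.2.isLt; omega
      rcases hD with ⟨hcol, hD⟩ | ⟨hcol, hD⟩ | ⟨hcol, hD⟩
      · have hsj : s.1 = j1 := Fin.ext (by rw [hcol])
        rw [hsj, ← hw, hcpw] at hKs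
        have := (colqq r (w - r - 1) (w - r - 1) (w - 2 * r - 2) (s.2.2 : ℕ)
          false s.2.1 hKs hD).1 rfl
        rcases this with h | h <;> omega
      · rw [hj1v] at hcol; omega
      · have hsj : s.1 = j := Fin.ext (by rw [hj1v] at hcol; omega)
        rw [hsj, ← hz, hcpz] at hKs
        rcases colnb _ _ _ _ hKs with h | h <;> omega
end

section
/- For every finite simple graph G and every two vertices u, v lying in the same connected component of G, the shortest-path distance satisfies d(u,v) ≤ 2^{td(G)+1} − 2; in particular the diameter of G is at most 2^{td(G)+1} − 2. -/
/-- The subgraph of `G` induced on the finite vertex set `A` (kept on the same vertex type: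
vertices outside `A` are isolated). -/
def onSet {V : Type*} (G : SimpleGraph V) (A : Finset V) : SimpleGraph V where
  Adj x y := x ∈ A ∧ y ∈ A ∧ G.Adj x y
  symm := ⟨fun _ _ ⟨hx, hy, h⟩ => ⟨hy, hx, h.symm⟩⟩
  loopless := ⟨fun x ⟨_, _, h⟩ => G.irrefl h⟩

/-- The subgraph of `G` induced on `A` is connected (with `A` nonempty). -/
def connOn {V : Type*} (G : SimpleGraph V) (A : Finset V) : Prop :=
  A.Nonempty ∧ ∀ x ∈ A, ∀ y ∈ A, (onSet G A).Reachable x y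

open Classical in
/-- Tree-depth of the subgraph of `G` induced on `A`, computed with fuel (any fuel `≥ A.card`
gives the correct value, since every recursive call strictly decreases the cardinality of the
vertex set): a graph with at most one vertex has tree-depth `0`; a connected graph with at
least two vertices has tree-depth `1 + min_{u} td(G − u)`; a disconnected graph has tree-depth
the maximum of the tree-depths of its connected components. -/
noncomputable def tdAux {V : Type*} (G : SimpleGraph V) : ℕ → Finset V → ℕ
  | 0, _ => 0
  | m + 1, A =>
    if h1 : A.card ≤ 1 then 0
    else if connOn G A then
      1 + A.inf' (Finset.card_pos.mp (by omega)) fun u => tdAux G m (A.erase u)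
    else
      A.sup fun v => tdAux G m (A.filter fun u => (onSet G A).Reachable v u)

/-- The tree-depth of a finite graph `G` (with the convention that a one-vertex graph has
tree-depth `0`). -/
noncomputable def treeDepth {V : Type*} [Fintype V] (G : SimpleGraph V) : ℕ :=
  tdAux G (Fintype.card V) Finset.univ

/-!
Induction on the recursive definition of tree-depth. If the graph is disconnected, a shortest
path lives in one component, whose tree-depth is at most `td(G)`. If it is connected, let `z`
be a vertex with `td(G − z) = td(G) − 1`. Any vertex `x` reaches a neighbour of `z` inside
`G − z`, so `d(x, z) ≤ (2^{td(G)} − 2) + 1`, and going through `z` gives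
`d(u, v) ≤ 2 (2^{td(G)} − 1) = 2^{td(G)+1} − 2`.
-/

section

variable {V : Type*} {G : SimpleGraph V}

def DiamLE (G : SimpleGraph V) (A : Finset V) (b : ℕ) : Prop :=
  ∀ x y, (onSet G A).Reachable x y → (onSet G A).dist x y ≤ b

lemma onSet_mono {A B : Finset V} (h : A ⊆ B) : onSet G A ≤ onSet G B :=
  fun _ _ ⟨hx, hy, hadj⟩ => ⟨h hx, h hy, hadj⟩

lemma onSet_univ [Fintype V] (G : SimpleGraph V) : onSet G Finset.univ = G := by
  ext x y
  simp [onSet]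

lemma mem_of_reachable_onSet_of_ne {A : Finset V} {x y : V} (h : (onSet G A).Reachable x y)
    (hne : x ≠ y) : x ∈ A := by
  obtain ⟨p⟩ := h
  cases p with
  | nil => exact absurd rfl hne
  | cons hadj _ => exact hadj.1

/-- The last vertex before `z` on a walk from `x` to `z` is reached from `x` avoiding `z`. -/
lemma exists_adj_reachable_onSet_erase [DecidableEq V] {A : Finset V} {z : V} :
    ∀ {x : V}, (onSet G A).Walk x z → x ≠ z →
      ∃ w, (onSet G A).Adj w z ∧ (onSet G (A.erase z)).Reachable x w := by
  intro x p
  induction p with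
  | nil => intro h; exact absurd rfl h
  | @cons a b c hadj q ih =>
    intro hne
    by_cases hb : b = c
    · subst hb
      exact ⟨a, hadj, .refl a⟩
    obtain ⟨w, hw, hreach⟩ := ih hb
    refine ⟨w, hw, SimpleGraph.Reachable.trans (SimpleGraph.Adj.reachable ?_) hreach⟩
    exact ⟨Finset.mem_erase.mpr ⟨hne, hadj.1⟩, Finset.mem_erase.mpr ⟨hb, hadj.2.1⟩,
      hadj.2.2⟩

lemma reachable_onSet_filter_reachable {A : Finset V} {u : V}
    [DecidablePred fun w => (onSet G A).Reachable u w] :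
    ∀ {x y : V}, (onSet G A).Walk x y → (onSet G A).Reachable u x →
      (onSet G (A.filter fun w => (onSet G A).Reachable u w)).Reachable x y := by
  intro x y p
  induction p with
  | nil => intro _; exact .refl _
  | @cons a b c hadj q ih =>
    intro hua
    have hub : (onSet G A).Reachable u b := hua.trans hadj.reachable
    refine SimpleGraph.Reachable.trans (SimpleGraph.Adj.reachable ?_) (ih hub)
    exact ⟨Finset.mem_filter.mpr ⟨hadj.1, hua⟩, Finset.mem_filter.mpr ⟨hadj.2.1, hub⟩,
      hadj.2.2⟩

lemma filter_reachable_ssubset_of_not_connOn {A : Finset V} {u : V}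
    [DecidablePred fun w => (onSet G A).Reachable u w] (hu : u ∈ A) (hc : ¬ connOn G A) :
    A.filter (fun w => (onSet G A).Reachable u w) ⊂ A := by
  refine (Finset.filter_subset _ _).ssubset_of_ne fun hEq =>
    hc ⟨⟨u, hu⟩, fun x hx y hy => ?_⟩
  rw [← hEq, Finset.mem_filter] at hx hy
  exact hx.2.symm.trans hy.2

lemma dist_onSet_le_of_diamLE_erase [DecidableEq V] {A : Finset V} {z : V} {b : ℕ}
    (hc : connOn G A) (hz : z ∈ A) (hb : DiamLE G (A.erase z) b) {x : V} (hx : x ∈ A) :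
    (onSet G A).dist x z ≤ b + 1 := by
  by_cases hxz : x = z
  · simp [hxz]
  obtain ⟨p⟩ := hc.2 x hx z hz
  obtain ⟨w, hwz, hxw⟩ := exists_adj_reachable_onSet_erase p hxz
  calc (onSet G A).dist x z ≤ (onSet G A).dist x w + (onSet G A).dist w z :=
        hwz.reachable.dist_triangle_right x
    _ ≤ (onSet G (A.erase z)).dist x w + 1 := by
        rw [SimpleGraph.dist_eq_one_iff_adj.mpr hwz]
        exact Nat.add_le_add_right (hxw.dist_anti (onSet_mono (Finset.erase_subset z A))) 1
    _ ≤ b + 1 := Nat.add_le_add_right (hb x w hxw) 1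

lemma diamLE_of_card_le_one {A : Finset V} (hA : A.card ≤ 1) : DiamLE G A 0 := by
  intro x y hxy
  by_cases hne : x = y
  · simp [hne]
  have hx := mem_of_reachable_onSet_of_ne hxy hne
  have hy := mem_of_reachable_onSet_of_ne hxy.symm (Ne.symm hne)
  exact absurd (Finset.one_lt_card.mpr ⟨x, hx, y, hy, hne⟩) (by omega)

lemma diamLE_of_connOn [DecidableEq V] {A : Finset V} {z : V} {b : ℕ} (hc : connOn G A)
    (hz : z ∈ A) (hb : DiamLE G (A.erase z) b) : DiamLE G A (2 * b + 2) := by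
  intro x y hxy
  by_cases hne : x = y
  · simp [hne]
  have hx := mem_of_reachable_onSet_of_ne hxy hne
  have hy := mem_of_reachable_onSet_of_ne hxy.symm (Ne.symm hne)
  have hxz := dist_onSet_le_of_diamLE_erase hc hz hb hx
  have hyz := dist_onSet_le_of_diamLE_erase hc hz hb hy
  rw [SimpleGraph.dist_comm] at hyz
  have := (hc.2 z hz y hy).dist_triangle_right x
  omega

lemma diamLE_of_forall_component {A : Finset V} {b : ℕ}
    [∀ u, DecidablePred fun w => (onSet G A).Reachable u w]
    (h : ∀ u ∈ A, DiamLE G (A.filter fun w => (onSet G A).Reachable u w) b) :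
    DiamLE G A b := by
  intro x y hxy
  by_cases hne : x = y
  · simp [hne]
  obtain ⟨p⟩ := hxy
  have hx := mem_of_reachable_onSet_of_ne ⟨p⟩ hne
  have hxyB := reachable_onSet_filter_reachable p (.refl x)
  exact (hxyB.dist_anti (onSet_mono (Finset.filter_subset _ _))).trans (h x hx x y hxyB)

open Classical in
lemma diamLE_tdAux (G : SimpleGraph V) (m : ℕ) :
    ∀ A : Finset V, A.card ≤ m → DiamLE G A (2 ^ (tdAux G m A + 1) - 2) := by
  induction m with
  | zero => exact fun A hA => diamLE_of_card_le_one (by omega)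
  | succ m ih =>
    intro A hA
    rw [tdAux]
    split_ifs with h1 hc
    · exact diamLE_of_card_le_one h1
    · obtain ⟨z, hz, hzmin⟩ := Finset.exists_mem_eq_inf'
        (Finset.card_pos.mp (show 0 < A.card by omega))
        fun w => tdAux G m (A.erase w)
      rw [hzmin]
      have hcard : (A.erase z).card ≤ m := by
        have := Finset.card_erase_of_mem hz
        omega
      have : 2 ≤ 2 ^ (tdAux G m (A.erase z) + 1) := Nat.le_self_pow (by omega) 2
      convert diamLE_of_connOn hc hz (ih _ hcard) using 1
      rw [show 1 + tdAux G m (A.erase z) + 1 = tdAux G m (A.erase z) + 1 + 1 by ring, pow_succ]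
      omega
    · refine diamLE_of_forall_component fun u hu => ?_
      have hcard : (A.filter fun w => (onSet G A).Reachable u w).card ≤ m := by
        have := Finset.card_lt_card (filter_reachable_ssubset_of_not_connOn hu hc)
        omega
      refine fun x y hxy => (ih _ hcard x y hxy).trans ?_
      gcongr
      · norm_num
      · exact Finset.le_sup
          (f := fun v => tdAux G m (A.filter fun w => (onSet G A).Reachable v w)) hu

end

/-- Any two vertices in the same connected component of `G` are at shortest-path distance at
most `2^{td(G)+1} − 2`; in particular the diameter of `G` is at most `2^{td(G)+1} − 2`. -/
theorem stmt9 {V : Type*} [Fintype V] (G : SimpleGraph V) (u v : V) (h : G.Reachable u v) :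
    G.dist u v ≤ 2 ^ (treeDepth G + 1) - 2 := by
  have := diamLE_tdAux G (Fintype.card V) Finset.univ le_rfl u v (by rwa [onSet_univ])
  rwa [onSet_univ] at this
end

section
/- Let G=(V,E) be an edge-weighted graph with positive edge weights, T a tree decomposition of G, and u, v two vertices that appear together in some bag of T and lie in the same connected component of G. Let G' be obtained from G by adding the edge (u,v) (if not already present) with weight w((u,v)) = d_G(u,v). Then T is a tree decomposition of G', the distances satisfy d_{G'}(x,y) = d_G(x,y) for all vertices x, y, and for all k, r, G' admits a (k,r)-center if and only if G does. -/
/-- `T` (a graph on node type `ι`) together with the bags `bag t` is a tree decomposition of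
`G`: `T` is a tree, every vertex is in some bag, every edge has both endpoints in some common
bag, and for each vertex the set of nodes whose bag contains it induces a connected subtree. -/
def IsTreeDecomp {V ι : Type*} (G : SimpleGraph V) (T : SimpleGraph ι) (bag : ι → Set V) :
    Prop :=
  T.IsTree ∧ (∀ v : V, ∃ t : ι, v ∈ bag t) ∧
  (∀ u v : V, G.Adj u v → ∃ t : ι, u ∈ bag t ∧ v ∈ bag t) ∧
  (∀ v : V, (T.induce {t : ι | v ∈ bag t}).Connected)

/-- The weighted distance in `(G, w)`: the minimum total weight of a walk from `x` to `y`
(`⊤` if there is none). -/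
noncomputable def wdist {V : Type*} (G : SimpleGraph V) (w : V → V → ℕ) (x y : V) : ℕ∞ :=
  ⨅ p : G.Walk x y, ((p.darts.map fun d => w d.toProd.1 d.toProd.2).sum : ℕ∞)

open SimpleGraph

private def wsum {V : Type*} (w : V → V → ℕ) {G : SimpleGraph V} {x y : V}
    (p : G.Walk x y) : ℕ :=
  (p.darts.map fun d => w d.toProd.1 d.toProd.2).sum

private lemma wdist_def {V : Type*} (G : SimpleGraph V) (w : V → V → ℕ) (x y : V) :
    wdist G w x y = ⨅ p : G.Walk x y, (wsum w p : ℕ∞) := rfl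

private lemma wsum_cons {V : Type*} (w : V → V → ℕ) {G : SimpleGraph V} {a b y : V}
    (h : G.Adj a b) (p : G.Walk b y) :
    wsum w (Walk.cons h p) = w a b + wsum w p := by
  simp [wsum]

private lemma wsum_append {V : Type*} (w : V → V → ℕ) {G : SimpleGraph V} {a b c : V}
    (p : G.Walk a b) (q : G.Walk b c) :
    wsum w (p.append q) = wsum w p + wsum w q := by
  simp [wsum, Walk.darts_append]

private lemma wsum_reverse {V : Type*} (w : V → V → ℕ) (hsymm : ∀ x y, w x y = w y x)
    {G : SimpleGraph V} {a b : V} (p : G.Walk a b) :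
    wsum w p.reverse = wsum w p := by
  unfold wsum
  rw [Walk.darts_reverse, List.map_reverse, List.sum_reverse, List.map_map]
  apply congrArg
  apply List.map_congr_left
  intro d _
  simp [hsymm d.toProd.2 d.toProd.1]

private lemma exists_min_walk {V : Type*} {G : SimpleGraph V} (w : V → V → ℕ) {x y : V}
    (h : G.Reachable x y) : ∃ p : G.Walk x y, (wsum w p : ℕ∞) = wdist G w x y := by
  obtain ⟨p₁⟩ := h
  have hS : (Set.range fun p : G.Walk x y => wsum w p).Nonempty := ⟨_, ⟨p₁, rfl⟩⟩
  obtain ⟨p, hp⟩ := Nat.sInf_mem hS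
  simp only at hp
  refine ⟨p, le_antisymm ?_ ?_⟩
  · refine le_iInf fun q => ?_
    show ((wsum w p : ℕ∞)) ≤ (wsum w q : ℕ∞)
    rw [hp]
    exact_mod_cast Nat.sInf_le (Set.mem_range.mpr ⟨q, rfl⟩)
  · exact iInf_le _ p

/-- Taking the metric closure of a bag: adding an edge `(u,v)` of weight `d_G(u,v)` between two
vertices appearing together in a bag of a tree decomposition `T` keeps `T` a valid tree
decomposition, preserves all distances, and preserves the existence of `(k,r)`-centers. -/
theorem stmt12 {V ι : Type*} [DecidableEq V] (G : SimpleGraph V) (w : V → V → ℕ)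
    (hsymm : ∀ x y : V, w x y = w y x) (hpos : ∀ x y : V, G.Adj x y → 0 < w x y)
    (T : SimpleGraph ι) (bag : ι → Set V)
    (hT : IsTreeDecomp G T bag)
    (u v : V) (hbag : ∃ t : ι, u ∈ bag t ∧ v ∈ bag t)
    (hreach : G.Reachable u v) :
    let G' : SimpleGraph V := G ⊔ SimpleGraph.fromEdgeSet {s(u, v)}
    let w' : V → V → ℕ := fun x y =>
      if (x = u ∧ y = v) ∨ (x = v ∧ y = u) then (wdist G w u v).toNat else w x y
    IsTreeDecomp G' T bag ∧
    (∀ x y : V, wdist G' w' x y = wdist G w x y) ∧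
    (∀ k r : ℕ,
      (∃ K : Finset V, K.card = k ∧ ∀ x : V, ∃ z ∈ K, wdist G' w' z x ≤ (r : ℕ∞)) ↔
      (∃ K : Finset V, K.card = k ∧ ∀ x : V, ∃ z ∈ K, wdist G w z x ≤ (r : ℕ∞))) := by
  intro G' w'
  obtain ⟨p₀, hp₀⟩ := exists_min_walk w hreach
  have htoNat : (wdist G w u v).toNat = wsum w p₀ := by
    rw [← hp₀]; exact ENat.toNat_coe _
  have hle : G ≤ G' := le_sup_left
  -- every G-walk yields a G'-walk of no greater weight
  have key1 : ∀ (x y : V) (p : G.Walk x y), ∃ q : G'.Walk x y, wsum w' q ≤ wsum w p := by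
    intro x y p
    induction p with
    | nil => exact ⟨Walk.nil, le_rfl⟩
    | cons h p ih =>
      rename_i a b c
      obtain ⟨q, hq⟩ := ih
      refine ⟨Walk.cons (hle h) q, ?_⟩
      rw [wsum_cons, wsum_cons]
      have hw : w' a b ≤ w a b := by
        show (if (a = u ∧ b = v) ∨ (a = v ∧ b = u) then (wdist G w u v).toNat else w a b)
          ≤ w a b
        split_ifs with hc
        · have hww : wdist G w u v ≤ (w a b : ℕ∞) := by
            rcases hc with ⟨rfl, rfl⟩ | ⟨rfl, rfl⟩
            · refine (iInf_le _ (Walk.cons h Walk.nil)).trans ?_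
              simp [wsum]
            · refine (iInf_le _ (Walk.cons h.symm Walk.nil)).trans ?_
              simp [wsum, hsymm a b]
          calc (wdist G w u v).toNat ≤ ((w a b : ℕ∞)).toNat :=
                ENat.toNat_le_toNat hww (by simp)
            _ = w a b := by simp
        · exact le_rfl
      exact add_le_add hw hq
  -- every G'-walk yields a G-walk of no greater weight
  have key2 : ∀ (x y : V) (p : G'.Walk x y), ∃ q : G.Walk x y, wsum w q ≤ wsum w' p := by
    intro x y p
    induction p with
    | nil => exact ⟨Walk.nil, le_rfl⟩
    | cons h p ih =>
      rename_i a b c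
      obtain ⟨q, hq⟩ := ih
      by_cases hc : (a = u ∧ b = v) ∨ (a = v ∧ b = u)
      · have hw : w' a b = wsum w p₀ := by
          show (if (a = u ∧ b = v) ∨ (a = v ∧ b = u) then (wdist G w u v).toNat else w a b)
            = wsum w p₀
          rw [if_pos hc, htoNat]
        rcases hc with ⟨rfl, rfl⟩ | ⟨rfl, rfl⟩
        · refine ⟨p₀.append q, ?_⟩
          rw [wsum_append, wsum_cons, hw]
          exact add_le_add le_rfl hq
        · refine ⟨p₀.reverse.append q, ?_⟩
          rw [wsum_append, wsum_cons, hw, wsum_reverse w hsymm]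
          exact add_le_add le_rfl hq
      · have hadj : G.Adj a b := by
          rcases (sup_adj _ _ _ _).mp h with h' | h'
          · exact h'
          · exfalso
            obtain ⟨hm, _⟩ := (fromEdgeSet_adj _).mp h'
            rw [Set.mem_singleton_iff, Sym2.eq_iff] at hm
            exact hc hm
        have hw : w' a b = w a b := by
          show (if (a = u ∧ b = v) ∨ (a = v ∧ b = u) then (wdist G w u v).toNat else w a b)
            = w a b
          rw [if_neg hc]
        refine ⟨Walk.cons hadj q, ?_⟩
        rw [wsum_cons, wsum_cons, hw]
        exact add_le_add le_rfl hq
  have hdist : ∀ x y : V, wdist G' w' x y = wdist G w x y := by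
    intro x y
    rw [wdist_def, wdist_def]
    apply le_antisymm
    · refine le_iInf fun p => ?_
      obtain ⟨q, hq⟩ := key1 x y p
      exact (iInf_le _ q).trans (by exact_mod_cast hq)
    · refine le_iInf fun p => ?_
      obtain ⟨q, hq⟩ := key2 x y p
      exact (iInf_le _ q).trans (by exact_mod_cast hq)
  refine ⟨⟨hT.1, hT.2.1, ?_, hT.2.2.2⟩, hdist, ?_⟩
  · intro a b hab
    rcases (sup_adj _ _ _ _).mp hab with h' | h'
    · exact hT.2.2.1 a b h'
    · obtain ⟨hm, _⟩ := (fromEdgeSet_adj _).mp h'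
      rw [Set.mem_singleton_iff, Sym2.eq_iff] at hm
      obtain ⟨t, htu, htv⟩ := hbag
      rcases hm with ⟨rfl, rfl⟩ | ⟨rfl, rfl⟩
      · exact ⟨t, htu, htv⟩
      · exact ⟨t, htv, htu⟩
  · intro k r
    constructor
    · rintro ⟨K, hK, hcov⟩
      exact ⟨K, hK, fun x => by obtain ⟨z, hz, hzx⟩ := hcov x
                                exact ⟨z, hz, (hdist z x) ▸ hzx⟩⟩
    · rintro ⟨K, hK, hcov⟩
      exact ⟨K, hK, fun x => by obtain ⟨z, hz, hzx⟩ := hcov x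
                                exact ⟨z, hz, (hdist z x) ▸ hzx⟩⟩
end

section
/- If an edge-weighted graph G with positive real edge weights admits a valid δ-labeling dl of cost k, then K = dl⁻¹(0) is a (k,(1+ε)²r)-center of G; more precisely, every vertex u satisfies d_w(K,u) ≤ (1+ε)·dl(u) ≤ (1+ε)²·r. -/
/-- The total weight of a walk in a real-edge-weighted graph. -/
def wWeightR {V : Type*} (G : SimpleGraph V) (w : V → V → ℝ) {a b : V} (p : G.Walk a b) : ℝ :=
  (p.darts.map fun d => w d.toProd.1 d.toProd.2).sum

lemma wWeightR_concat {V : Type*} (G : SimpleGraph V) (w : V → V → ℝ) {a b c : V}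
    (p : G.Walk a b) (h : G.Adj b c) :
    wWeightR G w (p.concat h) = wWeightR G w p + w b c := by
  simp [wWeightR, SimpleGraph.Walk.darts_concat]

lemma key13 {V : Type*} [Fintype V] (G : SimpleGraph V) (w : V → V → ℝ)
    (hpos : ∀ x y : V, G.Adj x y → 0 < w x y) (ε : ℝ) (hε : 0 < ε) (dl : V → ℝ)
    (hvalid : ∀ u : V, dl u = 0 ∨ ∃ v : V, G.Adj v u ∧ dl v + w v u / (1 + ε) ≤ dl u) :
    ∀ n : ℕ, ∀ u : V, (Finset.univ.filter fun x => dl x < dl u).card ≤ n →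
      ∃ v, dl v = 0 ∧ ∃ p : G.Walk v u, wWeightR G w p ≤ (1 + ε) * dl u := by
  intro n
  induction n with
  | zero =>
    intro u hc
    rcases hvalid u with h0 | ⟨v, hadj, hle⟩
    · exact ⟨u, h0, SimpleGraph.Walk.nil, by simp [wWeightR, h0]⟩
    · exfalso
      have hw : 0 < w v u / (1 + ε) := div_pos (hpos v u hadj) (by linarith)
      have hv : dl v < dl u := by linarith
      have : v ∈ Finset.univ.filter fun x => dl x < dl u := by simp [hv]
      have := Finset.card_pos.mpr ⟨v, this⟩
      omega
  | succ n ih =>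
    intro u hc
    rcases hvalid u with h0 | ⟨v, hadj, hle⟩
    · exact ⟨u, h0, SimpleGraph.Walk.nil, by simp [wWeightR, h0]⟩
    · have hw : 0 < w v u / (1 + ε) := div_pos (hpos v u hadj) (by linarith)
      have hv : dl v < dl u := by linarith
      have hsub : (Finset.univ.filter fun x => dl x < dl v) ⊂
          (Finset.univ.filter fun x => dl x < dl u) := by
        rw [Finset.ssubset_def]
        constructor
        · intro x hx
          simp only [Finset.mem_filter, Finset.mem_univ, true_and] at *
          exact lt_trans hx hv
        · intro h
          have := h (by simp [hv] : v ∈ Finset.univ.filter fun x => dl x < dl u)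
          simp at this
      have hcard : (Finset.univ.filter fun x => dl x < dl v).card ≤ n := by
        have := Finset.card_lt_card hsub
        omega
      obtain ⟨v0, hv0, p, hp⟩ := ih v hcard
      refine ⟨v0, hv0, p.concat hadj, ?_⟩
      rw [wWeightR_concat]
      have hmul : (1 + ε) * (dl v + w v u / (1 + ε)) ≤ (1 + ε) * dl u :=
        mul_le_mul_of_nonneg_left hle (by linarith)
      have : (1 + ε) * (w v u / (1 + ε)) = w v u := by field_simp
      nlinarith [hp]

/-- If `dl` is a valid `δ`-labeling of cost `k` (each label is `0` or a power `(1+δ)^i ≤ (1+ε)r`,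
and every vertex `u` with `dl u ≠ 0` has a neighbor `v` with `dl v + w(v,u)/(1+ε) ≤ dl u`), then
`K = dl⁻¹(0)` is a `(k,(1+ε)²r)`-center: every vertex `u` is at weighted distance at most
`(1+ε)·dl u ≤ (1+ε)²·r` from `K`. -/
theorem stmt13 {V : Type*} [Fintype V] (G : SimpleGraph V) (w : V → V → ℝ)
    (hsymm : ∀ x y : V, w x y = w y x) (hpos : ∀ x y : V, G.Adj x y → 0 < w x y)
    (r ε δ : ℝ) (hr : 0 < r) (hε : 0 < ε) (hδ : 0 < δ) (k : ℕ) (dl : V → ℝ)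
    (hrange : ∀ u : V, dl u = 0 ∨ ∃ i : ℕ, dl u = (1 + δ) ^ i ∧ (1 + δ) ^ i ≤ (1 + ε) * r)
    (hvalid : ∀ u : V, dl u = 0 ∨ ∃ v : V, G.Adj v u ∧ dl v + w v u / (1 + ε) ≤ dl u)
    (hcost : (Finset.univ.filter fun u => dl u = 0).card = k) :
    ∀ u : V, ∃ v : V, dl v = 0 ∧
      (∃ p : G.Walk v u, wWeightR G w p ≤ (1 + ε) * dl u) ∧
      (1 + ε) * dl u ≤ (1 + ε) ^ 2 * r := by
  intro u
  obtain ⟨v, hv0, p, hp⟩ := key13 G w hpos ε hε dl hvalid (Fintype.card V) u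
    (le_trans (Finset.card_le_univ _) (le_of_eq (Finset.card_univ)))
  refine ⟨v, hv0, ⟨p, hp⟩, ?_⟩
  rcases hrange u with h0 | ⟨i, hi, hle⟩
  · rw [h0]; nlinarith
  · rw [hi]; nlinarith
end

section
/- Let G be an edge-weighted graph with positive edge weights, B a finite set of vertices, and u ∉ B a vertex adjacent to every vertex of B, such that any two distinct v₁, v₂ ∈ B are adjacent and w((v₂,v₁)) ≤ w((v₂,u)) + w((u,v₁)). Let dl assign a nonnegative real number to each vertex of B ∪ {u}, and say that a vertex x is satisfied by a vertex y if y is adjacent to x and dl(x) ≥ dl(y) + w((y,x)). Then at least one of the following holds: (i) dl(u) = 0; (ii) every v ∈ B that is satisfied by u is also satisfied by some vertex of B; (iii) u is not satisfied by any vertex of B. -/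
/-- The Introduce-node case analysis: `B` is a bag on which the metric closure has been taken
(any two distinct vertices of `B` are adjacent and the triangle inequality through `u` holds),
`u ∉ B` is adjacent to all of `B`, and `dl` assigns nonnegative reals. Saying that `x` is
*satisfied by* `y` when `y` is adjacent to `x` and `dl x ≥ dl y + w (y,x)`, at least one of the
following holds: (i) `dl u = 0`; (ii) every `v ∈ B` satisfied by `u` is satisfied by some
vertex of `B`; (iii) `u` is not satisfied by any vertex of `B`. -/
theorem stmt18 {V : Type*} (G : SimpleGraph V) (w : V → V → ℝ)
    (hpos : ∀ x y : V, G.Adj x y → 0 < w x y)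
    (B : Finset V) (u : V) (hu : u ∉ B)
    (hadj : ∀ v ∈ B, G.Adj u v)
    (hclique : ∀ v₁ ∈ B, ∀ v₂ ∈ B, v₁ ≠ v₂ → G.Adj v₁ v₂ ∧ w v₂ v₁ ≤ w v₂ u + w u v₁)
    (dl : V → ℝ) (hdl : ∀ x : V, 0 ≤ dl x) :
    dl u = 0 ∨
    (∀ v ∈ B, (G.Adj u v ∧ dl u + w u v ≤ dl v) →
      ∃ v' ∈ B, G.Adj v' v ∧ dl v' + w v' v ≤ dl v) ∨
    (∀ v ∈ B, ¬ (G.Adj v u ∧ dl v + w v u ≤ dl u)) := by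
  by_cases hiii : ∀ v ∈ B, ¬ (G.Adj v u ∧ dl v + w v u ≤ dl u)
  · exact Or.inr (Or.inr hiii)
  · push_neg at hiii
    obtain ⟨v₂, hv₂B, hadj₂, hle₂⟩ := hiii
    refine Or.inr (Or.inl ?_)
    intro v hvB ⟨hadjuv, hlev⟩
    refine ⟨v₂, hv₂B, ?_⟩
    rcases eq_or_ne v v₂ with rfl | hne
    · exfalso
      have h1 := hpos v u hadj₂
      have h2 := hpos u v hadjuv
      linarith
    · obtain ⟨hadj', htri⟩ := hclique v hvB v₂ hv₂B hne
      exact ⟨hadj'.symm, by linarith⟩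
end
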